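/- Let α = (α_1,…,α_N) ∈ ℂ^N and let (f,g) ∈ S̃(α). If all the roots of the characteristic polynomial of the mixed frame operator TU* are purely imaginary (have zero real part), then FP(f,g) is a real number, ∑_{m=1}^N α_m is purely imaginary, and FP(f,g) ≤ (1/d)·(∑_{m=1}^N α_m)² (the right-hand side being a nonpositive real number). -/

import Mathlib

open scoped ComplexInnerProductSpace

/- `H` is a complex inner product space of finite dimension `d = Module.finrank ℂ H`.
The paper's inner product `⟨x, y⟩` is linear in the first argument, hence it corresponds to
Mathlib's `⟪y, x⟫ = inner y x` (Mathlib's inner product is linear in the second argument). -/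
variable {H : Type*} [NormedAddCommGroup H] [InnerProductSpace ℂ H] [FiniteDimensional ℂ H]

/-- The mixed frame operator `TU⋆ : x ↦ ∑ m, ⟨x, g m⟩ f m` (paper convention),
i.e. `x ↦ ∑ m, ⟪g m, x⟫ • f m` in Mathlib's convention. Note that `UT⋆` for the pair
`(f, g)` is then `mixedOp g f`. -/
noncomputable def mixedOp {N : ℕ} (f g : Fin N → H) : H →ₗ[ℂ] H where
  toFun x := ∑ m, (⟪g m, x⟫) • f m
  map_add' x y := by
    simp [inner_add_right, add_smul, Finset.sum_add_distrib]
  map_smul' c x := by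
    simp [inner_smul_right, mul_smul, Finset.smul_sum]

/-- The mixed frame potential `FP(f,g) = ∑ m, ∑ n, ⟨f m, g n⟩ * ⟨f n, g m⟩`
(paper convention: inner product linear in the first argument). -/
noncomputable def mixedFP {N : ℕ} (f g : Fin N → H) : ℂ :=
  ∑ m, ∑ n, ⟪g n, f m⟫ * ⟪g m, f n⟫

/-!
`FP(f,g)` and `∑ α` are the traces of `(TU⋆)²` and `TU⋆`, i.e. the power sums `∑ λ²` and `∑ λ`
of the eigenvalues `λ = i y` of `TU⋆`. So `FP(f,g) = -∑ y²` is real, `∑ α = i ∑ y` is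
imaginary, and the bound `-∑ y² ≤ -(∑ y)² / d` is the Cauchy–Schwarz inequality.
-/

theorem Matrix.eval_charpoly_sq_sq {R n : Type*} [CommRing R] [Fintype n] [DecidableEq n]
    (A : Matrix n n R) (x : R) :
    (A ^ 2).charpoly.eval (x ^ 2) =
      (-1) ^ Fintype.card n * A.charpoly.eval x * A.charpoly.eval (-x) := by
  have hfactor : scalar n (x ^ 2) - A ^ 2 = (scalar n x + A) * (scalar n x - A) := by
    rw [map_pow, (scalar_commute x (fun _ => Commute.all _ _) A).sq_sub_sq]
  have hneg : scalar n (-x) - A = -(scalar n x + A) := by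
    rw [map_neg]
    abel
  have hsign : ((-1 : R) ^ Fintype.card n) * (-1) ^ Fintype.card n = 1 := by
    rw [← mul_pow, neg_one_mul, neg_neg, one_pow]
  rw [eval_charpoly, eval_charpoly, eval_charpoly, hfactor, det_mul, hneg, det_neg]
  linear_combination (-(scalar n x + A).det * (scalar n x - A).det) * hsign

open Polynomial in
theorem Matrix.roots_charpoly_sq {K n : Type*} [Field K] [IsAlgClosed K] [Fintype n]
    [DecidableEq n] (A : Matrix n n K) :
    (A ^ 2).charpoly.roots = A.charpoly.roots.map (· ^ 2) := by
  set s := A.charpoly.roots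
  have hsplit : A.charpoly = (s.map fun a => X - C a).prod :=
    (IsAlgClosed.splits _).eq_prod_roots_of_monic A.charpoly_monic
  have hcard : Multiset.card s = Fintype.card n := by
    rw [← A.charpoly_natDegree_eq_dim, (IsAlgClosed.splits _).natDegree_eq_card_roots]
  suffices (A ^ 2).charpoly = ((s.map (· ^ 2)).map fun a => X - C a).prod by
    rw [this, roots_multiset_prod_X_sub_C]
  -- both sides agree at every square `x ^ 2` by `eval_charpoly_sq_sq`, and every `y` is one
  refine Polynomial.funext fun y => ?_
  obtain ⟨x, rfl⟩ := IsAlgClosed.exists_pow_nat_eq y two_pos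
  rw [eval_charpoly_sq_sq, hsplit, ← hcard]
  simp only [eval_multiset_prod, Multiset.map_map, Function.comp_def, eval_sub, eval_X, eval_C]
  rw [mul_right_comm, ← Multiset.card_map (fun a => -x - a) s, ← Multiset.prod_map_neg,
    Multiset.map_map, ← Multiset.prod_map_mul]
  exact congrArg _ (Multiset.map_congr rfl fun a _ => by simp only [Function.comp_apply]; ring)

section

variable {K V : Type*} [Field K] [IsAlgClosed K] [AddCommGroup V] [Module K V]
  [FiniteDimensional K V] (φ : Module.End K V)

theorem Module.End.card_roots_charpoly :
    Multiset.card φ.charpoly.roots = Module.finrank K V := by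
  rw [← (IsAlgClosed.splits _).natDegree_eq_card_roots, LinearMap.charpoly_natDegree]

theorem Module.End.trace_sq_eq_sum_sq_roots_charpoly :
    LinearMap.trace K V (φ ^ 2) = (φ.charpoly.roots.map (· ^ 2)).sum := by
  let b := Module.Free.chooseBasis K V
  rw [trace_eq_sum_roots_charpoly_of_splits (IsAlgClosed.splits _),
    ← LinearMap.charpoly_toMatrix _ b, ← LinearMap.toMatrix_pow, Matrix.roots_charpoly_sq,
    LinearMap.charpoly_toMatrix]

end

theorem Multiset.sq_sum_div_card_le_sum_sq {α : Type*} [Field α] [LinearOrder α]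
    [IsStrictOrderedRing α] (t : Multiset α) :
    t.sum ^ 2 / card t ≤ (t.map (· ^ 2)).sum := by
  have hsum (φ : α → α) : ∑ x ∈ t.toEnumFinset, φ x.1 = (t.map φ).sum := by
    conv_rhs => rw [← map_toEnumFinset_fst t, map_map]
    rfl
  refine div_le_of_le_mul₀ (Nat.cast_nonneg _) (sum_nonneg fun x hx => ?_) ?_
  · obtain ⟨y, -, rfl⟩ := mem_map.mp hx
    exact sq_nonneg y
  · have key := sq_sum_le_card_mul_sum_sq (s := t.toEnumFinset) (f := Prod.fst)
    have hsum_id : ∑ x ∈ t.toEnumFinset, x.1 = t.sum := by simpa using hsum id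
    rwa [hsum_id, hsum (· ^ 2), card_toEnumFinset, mul_comm] at key

section

open Complex

theorem Multiset.exists_eq_map_mul_I_of_forall_re_eq_zero {s : Multiset ℂ}
    (hs : ∀ z ∈ s, z.re = 0) : ∃ t : Multiset ℝ, s = t.map fun y : ℝ => (y : ℂ) * I := by
  refine ⟨s.map im, ?_⟩
  rw [map_map]
  conv_lhs => rw [← map_id s]
  exact map_congr rfl fun z hz => Complex.ext (by simp [hs z hz]) (by simp)

theorem Multiset.sum_map_ofReal_mul_I (t : Multiset ℝ) :
    (t.map fun y : ℝ => (y : ℂ) * I).sum = (t.sum : ℂ) * I := by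
  rw [sum_map_mul_right, ← ofRealHom_eq_coe, map_multiset_sum]
  rfl

theorem Multiset.sum_map_sq_ofReal_mul_I (t : Multiset ℝ) :
    ((t.map fun y : ℝ => (y : ℂ) * I).map (· ^ 2)).sum =
      -(((t.map fun y : ℝ => y ^ 2).sum : ℝ) : ℂ) := by
  rw [map_map, ← ofRealHom_eq_coe, map_multiset_sum, map_map, ← sum_map_neg', map_map]
  exact congrArg _ (map_congr rfl fun y _ => by simp [mul_pow])

end

section

variable {N : ℕ} (f g : Fin N → H)

omit [FiniteDimensional ℂ H] in
@[simp]
theorem mixedOp_apply (x : H) : mixedOp f g x = ∑ m, ⟪g m, x⟫ • f m := rfl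

omit [FiniteDimensional ℂ H] in
theorem mixedOp_eq_sum_smulRight :
    mixedOp f g = ∑ m, (innerₛₗ ℂ (g m)).smulRight (f m) := by
  ext x
  simp

theorem trace_mixedOp : LinearMap.trace ℂ H (mixedOp f g) = ∑ m, ⟪g m, f m⟫ := by
  simp [mixedOp_eq_sum_smulRight]

omit [FiniteDimensional ℂ H] in
theorem mixedOp_sq : mixedOp f g ^ 2 = mixedOp (fun m => mixedOp f g (f m)) g := by
  ext x
  simp [sq]

theorem mixedFP_eq_trace_sq : mixedFP f g = LinearMap.trace ℂ H (mixedOp f g ^ 2) := by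
  simp [mixedOp_sq, trace_mixedOp, mixedFP]

end

theorem mixedFP_upper_bound_of_imaginary_eigenvalues_general {N : ℕ}
    (α : Fin N → ℂ) (f g : Fin N → H) (hS : ∀ m, ⟪g m, f m⟫ = α m)
    (hroots : ∀ z ∈ (LinearMap.charpoly (mixedOp f g)).roots, z.re = 0) :
    (mixedFP f g).im = 0 ∧ (∑ m, α m).re = 0 ∧
    (mixedFP f g).re ≤ (1 / (Module.finrank ℂ H : ℝ)) * ((∑ m, α m) ^ 2).re := by
  obtain ⟨t, ht⟩ := Multiset.exists_eq_map_mul_I_of_forall_re_eq_zero hroots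
  have hα : ∑ m, α m = (t.sum : ℂ) * Complex.I := by
    rw [← Finset.sum_congr rfl fun m _ => hS m, ← trace_mixedOp,
      Module.End.trace_eq_sum_roots_charpoly_of_splits (IsAlgClosed.splits _), ht,
      Multiset.sum_map_ofReal_mul_I]
  have hFP : mixedFP f g = -(((t.map fun y : ℝ => y ^ 2).sum : ℝ) : ℂ) := by
    rw [mixedFP_eq_trace_sq, Module.End.trace_sq_eq_sum_sq_roots_charpoly, ht,
      Multiset.sum_map_sq_ofReal_mul_I]
  have hdim : Module.finrank ℂ H = Multiset.card t := by
    rw [← Module.End.card_roots_charpoly (mixedOp f g), ht, Multiset.card_map]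
  refine ⟨by simp [hFP], by simp [hα], ?_⟩
  rw [hFP, hα, hdim]
  simpa [mul_pow, ← Complex.ofReal_pow, div_eq_inv_mul] using Multiset.sq_sum_div_card_le_sum_sq t

/-- if all eigenvalues of `TU⋆` (roots of its characteristic polynomial) are
purely imaginary, then `FP(f,g)` is real, `∑ α m` is purely imaginary, and
`FP(f,g) ≤ (1/d) (∑ α m)²` (the right-hand side being a nonpositive real number). -/
theorem mixedFP_upper_bound_of_imaginary_eigenvalues {N : ℕ} (hd : 1 ≤ Module.finrank ℂ H)
    (α : Fin N → ℂ) (f g : Fin N → H) (hS : ∀ m, ⟪g m, f m⟫ = α m)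
    (hroots : ∀ z ∈ (LinearMap.charpoly (mixedOp f g)).roots, z.re = 0) :
    (mixedFP f g).im = 0 ∧ (∑ m, α m).re = 0 ∧
    (mixedFP f g).re ≤ (1 / (Module.finrank ℂ H : ℝ)) * ((∑ m, α m) ^ 2).re :=
  mixedFP_upper_bound_of_imaginary_eigenvalues_general α f g hS hroots
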